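/- The set ℤ×{0} is a θ-discrete subset of the Bing space B. -/

import Mathlib

/-- A point of the Bing space: a rational pair `(x, y)` with `0 ≤ y`. -/
structure BingPt where
  x : ℚ
  y : ℚ
  hy : 0 ≤ y

/-- The pair of base "intervals" attached to the point `(a,b)`:
rational points `(x,0)` with `|x - (a - b/√3)| < ε` or `|x - (a + b/√3)| < ε`. -/
def wedge (a b : ℚ) (ε : ℝ) : Set BingPt :=
  {z : BingPt | z.y = 0 ∧ (|(z.x : ℝ) - ((a : ℝ) - (b : ℝ) / Real.sqrt 3)| < ε ∨
    |(z.x : ℝ) - ((a : ℝ) + (b : ℝ) / Real.sqrt 3)| < ε)}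

/-- A set `U` is Bing-open if each of its points `(a,b)` admits `ε > 0`
with the corresponding base intervals contained in `U`. -/
def BingOpen (U : Set BingPt) : Prop :=
  ∀ z ∈ U, ∃ ε : ℝ, 0 < ε ∧ wedge z.x z.y ε ⊆ U

/-- The Bing topology. -/
instance : TopologicalSpace BingPt where
  IsOpen := BingOpen
  isOpen_univ := fun _ _ => ⟨1, one_pos, fun _ _ => trivial⟩
  isOpen_inter := by
    intro U V hU hV z hz
    obtain ⟨ε1, hε1, h1⟩ := hU z hz.1
    obtain ⟨ε2, hε2, h2⟩ := hV z hz.2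
    refine ⟨min ε1 ε2, lt_min hε1 hε2, fun w hw => ⟨h1 ⟨hw.1, ?_⟩, h2 ⟨hw.1, ?_⟩⟩⟩
    · exact hw.2.imp (fun h => h.trans_le (min_le_left _ _)) (fun h => h.trans_le (min_le_left _ _))
    · exact hw.2.imp (fun h => h.trans_le (min_le_right _ _)) (fun h => h.trans_le (min_le_right _ _))
  isOpen_sUnion := by
    intro S hS z hz
    obtain ⟨U, hU, hzU⟩ := hz
    obtain ⟨ε, hε, h⟩ := hS U hU z hzU
    exact ⟨ε, hε, fun w hw => ⟨U, hU, h hw⟩⟩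

/-- `D` is θ-discrete: every point has a neighborhood whose closure meets `D` in ≤ 1 point. -/
def ThetaDiscrete {X : Type*} [TopologicalSpace X] (D : Set X) : Prop :=
  ∀ x : X, ∃ O ∈ nhds x, (closure O ∩ D).Subsingleton

/-- `D` is θ-closed: every point outside `D` has a neighborhood whose closure misses `D`. -/
def ThetaClosed {X : Type*} [TopologicalSpace X] (D : Set X) : Prop :=
  ∀ x : X, x ∉ D → ∃ O ∈ nhds x, closure O ∩ D = ∅

/-- `D` is discrete (as a subset): every point has a neighborhood meeting `D` in ≤ 1 point. -/
def DiscreteIn {X : Type*} [TopologicalSpace X] (D : Set X) : Prop :=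
  ∀ x : X, ∃ O ∈ nhds x, (O ∩ D).Subsingleton

/-!
A point `p` has the basic neighbourhood `{p} ∪ wedge`, made of `p` and the two open `ε`-intervals
around its feet `p.x ∓ p.y/√3` on the base line; its closure meets the base line only inside the
closed `ε`-intervals. On the base line both feet are `p.x`, and with `ε = 1/3` the closed interval
holds at most one integer. Off the base line both feet are irrational, hence at positive distance
from the closed set `ℤ ⊆ ℝ`, and a small `ε` keeps the closure away from `ℤ × {0}` altogether.
-/

namespace BingPt

open Metric Set

theorem ext {p q : BingPt} (hx : p.x = q.x) (hy : p.y = q.y) : p = q := by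
  cases p; cases q; simp_all

/-- The two points `a ∓ b/√3` where the lines of slope `±√3` through `(a, b)` meet the base line. -/
noncomputable def leftFoot (p : BingPt) : ℝ := p.x - p.y / √3

noncomputable def rightFoot (p : BingPt) : ℝ := p.x + p.y / √3

theorem leftFoot_of_y_eq_zero {p : BingPt} (hp : p.y = 0) : leftFoot p = p.x := by
  simp [leftFoot, hp]

theorem rightFoot_of_y_eq_zero {p : BingPt} (hp : p.y = 0) : rightFoot p = p.x := by
  simp [rightFoot, hp]

theorem irrational_leftFoot {p : BingPt} (hp : p.y ≠ 0) : Irrational (leftFoot p) :=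
  (by simpa using Nat.prime_three.irrational_sqrt : Irrational √3).ratCast_div hp |>.ratCast_sub p.x

theorem irrational_rightFoot {p : BingPt} (hp : p.y ≠ 0) : Irrational (rightFoot p) :=
  (by simpa using Nat.prime_three.irrational_sqrt : Irrational √3).ratCast_div hp |>.ratCast_add p.x

theorem wedge_eq (p : BingPt) (ε : ℝ) :
    wedge p.x p.y ε = {z | z.y = 0 ∧ (z.x : ℝ) ∈ ball (leftFoot p) ε ∪ ball (rightFoot p) ε} := by
  ext z
  simp only [wedge, leftFoot, rightFoot, mem_ofPred_eq, mem_union, mem_ball, Real.dist_eq]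

theorem isOpen_setOf_y_eq_zero_and_mem {V : Set ℝ} (hV : IsOpen V) :
    IsOpen {z : BingPt | z.y = 0 ∧ (z.x : ℝ) ∈ V} := by
  rintro z ⟨hz0, hzV⟩
  obtain ⟨ε, hε, hball⟩ := Metric.isOpen_iff.mp hV _ hzV
  refine ⟨ε, hε, ?_⟩
  rintro w ⟨hw0, hw⟩
  simp only [hz0, Rat.cast_zero, zero_div, sub_zero, add_zero, or_self] at hw
  exact ⟨hw0, hball (by rwa [mem_ball, Real.dist_eq])⟩

theorem isClosed_setOf_y_eq_zero_imp_mem {F : Set ℝ} (hF : IsClosed F) :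
    IsClosed {z : BingPt | z.y = 0 → (z.x : ℝ) ∈ F} := by
  rw [← isOpen_compl_iff]
  convert isOpen_setOf_y_eq_zero_and_mem hF.isOpen_compl using 1
  ext z
  simp

theorem isOpen_insert_wedge (p : BingPt) {ε : ℝ} (hε : 0 < ε) :
    IsOpen (insert p (wedge p.x p.y ε)) := by
  have hW : IsOpen (wedge p.x p.y ε) := by
    rw [wedge_eq]
    exact isOpen_setOf_y_eq_zero_and_mem (isOpen_ball.union isOpen_ball)
  rintro z (rfl | hz)
  · exact ⟨ε, hε, subset_insert _ _⟩
  · obtain ⟨δ, hδ, h⟩ := hW z hz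
    exact ⟨δ, hδ, h.trans (subset_insert _ _)⟩

theorem closure_insert_wedge_subset (p : BingPt) {ε : ℝ} (hε : 0 ≤ ε) :
    closure (insert p (wedge p.x p.y ε)) ⊆
      {z | z.y = 0 → (z.x : ℝ) ∈ closedBall (leftFoot p) ε ∪ closedBall (rightFoot p) ε} := by
  refine closure_minimal (insert_subset_iff.mpr ⟨?_, ?_⟩)
    (isClosed_setOf_y_eq_zero_imp_mem (isClosed_closedBall.union isClosed_closedBall))
  · intro hp
    exact Or.inl (by rw [leftFoot_of_y_eq_zero hp]; exact mem_closedBall_self hε)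
  · rw [wedge_eq]
    rintro z ⟨-, hz⟩ -
    exact hz.imp (fun h => ball_subset_closedBall h) (fun h => ball_subset_closedBall h)

end BingPt

open Metric Set BingPt

theorem Int.eq_of_mem_closedBall_third {c : ℝ} {m n : ℤ} (hm : (m : ℝ) ∈ closedBall c (1 / 3))
    (hn : (n : ℝ) ∈ closedBall c (1 / 3)) : m = n := by
  have h : |((m - n : ℤ) : ℝ)| < 1 := by
    rw [Int.cast_sub, ← Real.dist_eq]
    linarith [dist_triangle_right (m : ℝ) n c, mem_closedBall.mp hm, mem_closedBall.mp hn]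
  have : |m - n| < 1 := by exact_mod_cast h
  rw [abs_lt] at this
  omega

theorem Irrational.exists_pos_forall_intCast_notMem_closedBall {f : ℝ} (hf : Irrational f) :
    ∃ ε > 0, ∀ m : ℤ, (m : ℝ) ∉ closedBall f ε := by
  obtain ⟨δ, hδ, hball⟩ := Metric.isOpen_iff.mp Real.isClosed_range_intCast.isOpen_compl f
    (by rintro ⟨m, rfl⟩; exact hf.ne_int m rfl)
  exact ⟨δ / 2, half_pos hδ, fun m hm =>
    hball (closedBall_subset_ball (half_lt_self hδ) hm) ⟨m, rfl⟩⟩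

/-- The set `ℤ × {0}` is θ-discrete in the Bing space. -/
theorem intSet_thetaDiscrete :
    ThetaDiscrete {z : BingPt | z.y = 0 ∧ ∃ n : ℤ, z.x = (n : ℚ)} := by
  intro p
  by_cases hp : p.y = 0
  · refine ⟨_, (isOpen_insert_wedge p (by norm_num : (0 : ℝ) < 1 / 3)).mem_nhds (mem_insert _ _), ?_⟩
    have hfeet := closure_insert_wedge_subset p (by norm_num : (0 : ℝ) ≤ 1 / 3)
    rw [leftFoot_of_y_eq_zero hp, rightFoot_of_y_eq_zero hp, union_self] at hfeet
    rintro q ⟨hq, hq0, m, hm⟩ r ⟨hr, hr0, n, hn⟩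
    have hmn : m = n := Int.eq_of_mem_closedBall_third
      (by simpa [hm] using hfeet hq hq0) (by simpa [hn] using hfeet hr hr0)
    exact BingPt.ext (by rw [hm, hn, hmn]) (hq0.trans hr0.symm)
  · obtain ⟨ε₁, hε₁, h₁⟩ := (irrational_leftFoot hp).exists_pos_forall_intCast_notMem_closedBall
    obtain ⟨ε₂, hε₂, h₂⟩ := (irrational_rightFoot hp).exists_pos_forall_intCast_notMem_closedBall
    refine ⟨_, (isOpen_insert_wedge p (lt_min hε₁ hε₂)).mem_nhds (mem_insert _ _), ?_⟩
    rintro q ⟨hq, hq0, m, hm⟩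
    have hfeet := closure_insert_wedge_subset p (lt_min hε₁ hε₂).le hq hq0
    rw [hm, Rat.cast_intCast] at hfeet
    rcases hfeet with h | h
    · exact absurd (closedBall_subset_closedBall (min_le_left _ _) h) (h₁ m)
    · exact absurd (closedBall_subset_closedBall (min_le_right _ _) h) (h₂ m)
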